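/- arXiv:2509.25221 — 5 statements merged into one kernel-verified Lean document; each statement's English description precedes it below -/
import Mathlib

section
/- Define c₀ = 0 and cₙ = √(2 + cₙ₋₁). Then for every k ≥ 1, 2^{k−1}·arctan(√(2 − c_{k−1})/c_k) = π/4. -/
open Real

theorem arctan_nested_radical_pi_quarter (c : ℕ → ℝ) (h0 : c 0 = 0)
    (hrec : ∀ n, c (n + 1) = Real.sqrt (2 + c n)) :
    ∀ k : ℕ, 1 ≤ k →
      2 ^ (k - 1) * Real.arctan (Real.sqrt (2 - c (k - 1)) / c k) = Real.pi / 4 := by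
  have hpi := Real.pi_pos
  -- bounds on angles
  have hbound : ∀ n : ℕ, 0 < Real.pi / 2 ^ (n + 1) ∧ Real.pi / 2 ^ (n + 1) ≤ Real.pi / 2 := by
    intro n
    constructor
    · positivity
    · apply div_le_div_of_nonneg_left hpi.le (by norm_num)
      calc (2:ℝ) ≤ 2 ^ 1 := by norm_num
        _ ≤ 2 ^ (n + 1) := by
          apply pow_le_pow_right₀ (by norm_num)
          omega
  have hc : ∀ n, c n = 2 * Real.cos (Real.pi / 2 ^ (n + 1)) := by
    intro n
    induction n with
    | zero => simp [h0, Real.cos_pi_div_two]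
    | succ n ih =>
      have h2 : Real.pi / 2 ^ (n + 2) = (Real.pi / 2 ^ (n + 1)) / 2 := by
        rw [pow_succ]; ring
      have hcs := Real.cos_sq (Real.pi / 2 ^ (n + 2))
      have h2' : 2 * (Real.pi / 2 ^ (n + 2)) = Real.pi / 2 ^ (n + 1) := by
        rw [pow_succ]; ring
      have hcos : 2 + c n = (2 * Real.cos (Real.pi / 2 ^ (n + 2))) ^ 2 := by
        rw [ih]; rw [h2'] at hcs; nlinarith [hcs]
      have hnn : 0 ≤ 2 * Real.cos (Real.pi / 2 ^ (n + 2)) := by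
        have hb := hbound (n + 1)
        have : 0 ≤ Real.cos (Real.pi / 2 ^ (n + 2)) :=
          Real.cos_nonneg_of_mem_Icc ⟨by linarith [hb.1], hb.2⟩
        linarith
      rw [hrec, hcos, Real.sqrt_sq hnn]
  intro k hk
  obtain ⟨m, rfl⟩ := Nat.exists_eq_add_of_le hk
  have hk1 : 1 + m - 1 = m := by omega
  rw [hk1]
  set θ := Real.pi / 2 ^ (m + 2) with hθ
  have hθpos : 0 < θ := (hbound (m + 1)).1
  have hθle : θ ≤ Real.pi / 4 := by
    rw [hθ]
    apply div_le_div_of_nonneg_left hpi.le (by norm_num)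
    calc (4:ℝ) = 2 ^ 2 := by norm_num
      _ ≤ 2 ^ (m + 2) := by
        apply pow_le_pow_right₀ (by norm_num)
        omega
  have hθlt : θ < Real.pi / 2 := lt_of_le_of_lt hθle (by linarith)
  have hcosθ : 0 < Real.cos θ := Real.cos_pos_of_mem_Ioo ⟨by linarith, hθlt⟩
  have hsinθ : 0 ≤ Real.sin θ := Real.sin_nonneg_of_nonneg_of_le_pi hθpos.le (by linarith)
  have h2θ : Real.pi / 2 ^ (m + 1) = 2 * θ := by
    rw [hθ, pow_succ]; ring
  have hck1 : c (1 + m) = 2 * Real.cos θ := by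
    rw [hc (1 + m), hθ]
    have : 1 + m + 1 = m + 2 := by omega
    rw [this]
  have hckm : c m = 2 * Real.cos (2 * θ) := by rw [hc m, h2θ]
  have hsin2 : 2 - c m = (2 * Real.sin θ) ^ 2 := by
    rw [hckm, Real.cos_two_mul']
    nlinarith [Real.sin_sq_add_cos_sq θ]
  have hsqrt : Real.sqrt (2 - c m) = 2 * Real.sin θ := by
    rw [hsin2, Real.sqrt_sq (by linarith)]
  rw [hsqrt, hck1]
  have hdiv : 2 * Real.sin θ / (2 * Real.cos θ) = Real.tan θ := by
    rw [Real.tan_eq_sin_div_cos]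
    field_simp
  rw [hdiv, Real.arctan_tan (by linarith) hθlt, hθ]
  rw [pow_succ, pow_succ]
  have h2m : (2:ℝ) ^ m ≠ 0 := by positivity
  field_simp
  ring
end

section
/- Define c₀ = 0, cₙ = √(2 + cₙ₋₁), and γ_k = ⌊c_k/√(2 − c_{k−1})⌋. Then lim_{k→∞} 2^{k−1}·arctan(1/γ_k) = π/4. -/
open Real Filter

private lemma arctan_le_self' {x : ℝ} (hx : 0 ≤ x) : Real.arctan x ≤ x := by
  have h1 : 0 ≤ Real.arctan x := by
    rw [← Real.arctan_zero]
    exact Real.arctan_strictMono.monotone hx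
  calc Real.arctan x ≤ Real.tan (Real.arctan x) :=
        Real.le_tan h1 (Real.arctan_lt_pi_div_two x)
    _ = x := Real.tan_arctan x

private lemma c_eq_series (c : ℕ → ℝ) (h0 : c 0 = 0)
    (hrec : ∀ n, c (n + 1) = Real.sqrt (2 + c n)) :
    ∀ n, c n = Real.sqrtTwoAddSeries 0 n := by
  intro n
  induction n with
  | zero => simpa using h0
  | succ n ih => rw [hrec, ih, Real.sqrtTwoAddSeries]

theorem gamma_arctan_tendsto_pi_quarter (c : ℕ → ℝ) (h0 : c 0 = 0)
    (hrec : ∀ n, c (n + 1) = Real.sqrt (2 + c n))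
    (γ : ℕ → ℤ) (hγ : ∀ k, γ k = ⌊c k / Real.sqrt (2 - c (k - 1))⌋) :
    Filter.Tendsto (fun k : ℕ => (2 : ℝ) ^ (k - 1) * Real.arctan (1 / (γ k : ℝ)))
      Filter.atTop (nhds (Real.pi / 4)) := by
  have hcs := c_eq_series c h0 hrec
  set θ : ℕ → ℝ := fun k => π / 2 ^ (k + 1) with hθdef
  have hθpos : ∀ k, 0 < θ k := fun k => by positivity
  have hθlim : Tendsto θ atTop (nhds 0) := by
    have h2 : Tendsto (fun k : ℕ => ((2 : ℝ) ^ (k + 1))⁻¹) atTop (nhds 0) := by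
      apply Tendsto.inv_tendsto_atTop
      exact (tendsto_pow_atTop_atTop_of_one_lt (by norm_num : (1:ℝ) < 2)).comp
        (tendsto_add_atTop_nat 1)
    have := h2.const_mul π
    simpa [hθdef, div_eq_mul_inv] using this
  set U : ℕ → ℝ := fun k => (π / 4) * (Real.cos (θ k) * (1 - Real.tan (θ k)))⁻¹ with hUdef
  have hUlim : Tendsto U atTop (nhds (π / 4)) := by
    have hcont : ContinuousAt (fun x : ℝ => (π / 4) * (Real.cos x * (1 - Real.tan x))⁻¹) 0 := by
      have htan : ContinuousAt Real.tan 0 := by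
        rw [Real.continuousAt_tan]; simp
      have h1 : ContinuousAt (fun x : ℝ => Real.cos x * (1 - Real.tan x)) 0 :=
        (Real.continuous_cos.continuousAt).mul (continuousAt_const.sub htan)
      exact continuousAt_const.mul (h1.inv₀ (by simp))
    have h0' : (π / 4) * (Real.cos 0 * (1 - Real.tan 0))⁻¹ = π / 4 := by simp
    exact h0' ▸ hcont.tendsto.comp hθlim
  have key : ∀ k : ℕ, 2 ≤ k →
      π / 4 ≤ (2 : ℝ) ^ (k - 1) * Real.arctan (1 / (γ k : ℝ)) ∧
      (2 : ℝ) ^ (k - 1) * Real.arctan (1 / (γ k : ℝ)) ≤ U k := by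
    intro k hk
    have hθp : 0 < θ k := hθpos k
    have hθle : θ k ≤ π / 8 := by
      have h8 : (8 : ℝ) ≤ 2 ^ (k + 1) := by
        calc (8 : ℝ) = 2 ^ 3 := by norm_num
          _ ≤ 2 ^ (k + 1) := by
            apply pow_le_pow_right₀ (by norm_num)
            omega
      exact div_le_div_of_nonneg_left pi_pos.le (by norm_num) h8
    have hθlt : θ k < π / 4 := lt_of_le_of_lt hθle (by linarith [pi_pos])
    have hθlt2 : θ k < π / 2 := by linarith [pi_pos]
    have hcos : 0 < Real.cos (θ k) := Real.cos_pos_of_mem_Ioo ⟨by linarith, hθlt2⟩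
    have hsin : 0 < Real.sin (θ k) := Real.sin_pos_of_pos_of_lt_pi hθp (by linarith [pi_pos])
    have htanlt : Real.tan (θ k) < 1 := by
      have := Real.tan_lt_tan_of_nonneg_of_lt_pi_div_two hθp.le
        (by linarith [pi_pos] : π / 4 < π / 2) hθlt
      rwa [Real.tan_pi_div_four] at this
    have hsinltcos : Real.sin (θ k) < Real.cos (θ k) := by
      have h := htanlt
      rw [Real.tan_eq_sin_div_cos, div_lt_one hcos] at h
      exact h
    -- compute the ratio c k / √(2 - c (k-1)) = cos θ / sin θ
    have hck : c k = 2 * Real.cos (θ k) := by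
      obtain ⟨n, rfl⟩ : ∃ n, k = n + 1 := ⟨k - 1, by omega⟩
      rw [hcs (n + 1), hθdef]
      simp only [Real.cos_pi_over_two_pow]
      ring
    have hsq : Real.sqrt (2 - c (k - 1)) = 2 * Real.sin (θ k) := by
      obtain ⟨n, rfl⟩ : ∃ n, k = n + 1 := ⟨k - 1, by omega⟩
      have hs := Real.sin_pi_over_two_pow_succ n
      have h1 : (n + 1 : ℕ) - 1 = n := by omega
      rw [h1, hcs n, hθdef]
      simp only
      rw [show n + 1 + 1 = n + 2 from rfl, hs]
      ring
    set g : ℝ := Real.cos (θ k) / Real.sin (θ k) with hgdef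
    have hratio : c k / Real.sqrt (2 - c (k - 1)) = g := by
      rw [hck, hsq, hgdef]
      rw [mul_div_mul_left _ _ (by norm_num : (2:ℝ) ≠ 0)]
    have hg1 : 1 < g := by
      rw [hgdef, lt_div_iff₀ hsin, one_mul]
      exact hsinltcos
    have hγk : γ k = ⌊g⌋ := by rw [hγ k, hratio]
    have hfloor_le : (γ k : ℝ) ≤ g := by rw [hγk]; exact Int.floor_le g
    have hlt_floor : g - 1 < (γ k : ℝ) := by rw [hγk]; exact Int.sub_one_lt_floor g
    have hγ1 : (1 : ℝ) ≤ (γ k : ℝ) := by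
      rw [hγk]
      exact_mod_cast Int.le_floor.mpr (by exact_mod_cast hg1.le)
    have hγpos : (0 : ℝ) < (γ k : ℝ) := by linarith
    -- 2^(k-1) * θ k = π / 4
    have h2pow : (2 : ℝ) ^ (k - 1) * θ k = π / 4 := by
      have hk1 : k + 1 = (k - 1) + 2 := by omega
      rw [hθdef]
      simp only
      rw [hk1, pow_add]
      have : (2 : ℝ) ^ (k - 1) ≠ 0 := by positivity
      field_simp
      ring
    constructor
    · -- lower bound
      have htan_le : Real.tan (θ k) ≤ 1 / (γ k : ℝ) := by
        have h1 : 1 / g ≤ 1 / (γ k : ℝ) := one_div_le_one_div_of_le hγpos hfloor_le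
        have h2 : Real.tan (θ k) = 1 / g := by
          rw [hgdef, Real.tan_eq_sin_div_cos, one_div_div]
        linarith
      have harctan : θ k ≤ Real.arctan (1 / (γ k : ℝ)) := by
        have := Real.arctan_strictMono.monotone htan_le
        rwa [Real.arctan_tan (by linarith) hθlt2] at this
      calc π / 4 = (2 : ℝ) ^ (k - 1) * θ k := h2pow.symm
        _ ≤ (2 : ℝ) ^ (k - 1) * Real.arctan (1 / (γ k : ℝ)) := by
            apply mul_le_mul_of_nonneg_left harctan (by positivity)
    · -- upper bound
      have hg1' : 0 < g - 1 := by linarith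
      have hstep1 : Real.arctan (1 / (γ k : ℝ)) ≤ 1 / (γ k : ℝ) :=
        arctan_le_self' (by positivity)
      have hstep2 : 1 / (γ k : ℝ) ≤ 1 / (g - 1) :=
        one_div_le_one_div_of_le hg1' hlt_floor.le
      have hcs_pos : 0 < Real.cos (θ k) - Real.sin (θ k) := by linarith
      have hg1eq : g - 1 = (Real.cos (θ k) - Real.sin (θ k)) / Real.sin (θ k) := by
        rw [hgdef]; field_simp
      have hstep3 : 1 / (g - 1) ≤ θ k / (Real.cos (θ k) - Real.sin (θ k)) := by
        rw [hg1eq, one_div_div]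
        gcongr
        exact Real.sin_le hθp.le
      have hfact : Real.cos (θ k) - Real.sin (θ k)
          = Real.cos (θ k) * (1 - Real.tan (θ k)) := by
        rw [Real.tan_eq_sin_div_cos]
        field_simp
      have hUk : U k = (2 : ℝ) ^ (k - 1) * (θ k / (Real.cos (θ k) - Real.sin (θ k))) := by
        rw [hUdef]
        simp only
        rw [hfact, ← h2pow]
        field_simp
      rw [hUk]
      apply mul_le_mul_of_nonneg_left _ (by positivity)
      linarith
  apply tendsto_of_tendsto_of_tendsto_of_le_of_le'
    (tendsto_const_nhds : Tendsto (fun _ : ℕ => π / 4) atTop (nhds (π / 4))) hUlim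
  · filter_upwards [eventually_ge_atTop 2] with k hk using (key k hk).1
  · filter_upwards [eventually_ge_atTop 2] with k hk using (key k hk).2
end

section
/- Define v : ℕ → ℝ by v 1 = v₁ for some real v₁ > 1 large enough that all iterates exceed 1, with vₙ = (vₙ₋₁ − 1/vₙ₋₁)/2. If vₙ > 1 for all 1 ≤ n ≤ k, then 2^{k−1}·arctan(1/v₁) = arctan(1/v_k). -/
/-
Writing `x = cot θ`, the map `x ↦ (x - 1/x)/2` is `cot θ ↦ cot 2θ`, so each step of the
recursion doubles `θ = arctan (1 / v n)`. Since `1 < |v n|` gives `|θ| < π/4`, the doubled angle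
stays in `(-π/2, π/2)` and no multiple of `π` has to be added.
-/

open Real

theorem two_mul_arctan_inv {x : ℝ} (hx : 1 < |x|) :
    2 * arctan (1 / x) = arctan (1 / ((x - 1 / x) / 2)) := by
  have hx0 : x ≠ 0 := by rintro rfl; norm_num at hx
  have hinv : |1 / x| < 1 := by
    rw [abs_div, abs_one, div_lt_one (by positivity)]
    exact hx
  rw [two_mul_arctan (abs_lt.1 hinv).1 (abs_lt.1 hinv).2]
  congr 1
  field_simp

theorem arctan_iteration (v : ℕ → ℝ) (k : ℕ) (hk : 1 ≤ k)
    (hrec : ∀ n, v (n + 1) = (v n - 1 / v n) / 2)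
    (hpos : ∀ n, 1 ≤ n → n ≤ k → 1 < v n) :
    2 ^ (k - 1) * Real.arctan (1 / v 1) = Real.arctan (1 / v k) := by
  induction k, hk using Nat.le_induction with
  | base => simp
  | succ m hm ih =>
    have hvm : 1 < |v m| := (hpos m hm m.le_succ).trans_le (le_abs_self _)
    rw [hrec m, ← two_mul_arctan_inv hvm, ← ih fun n hn hnm => hpos n hn (by omega),
      ← mul_assoc, ← pow_succ', Nat.add_sub_cancel, Nat.sub_add_cancel hm]
end

section
/- Euler's series for arctangent: for all real x, arctan(x) = Σ_{n=0}^∞ (2^{2n}·(n!)²/(2n+1)!) · x^{2n+1}/(1 + x²)^{n+1}. -/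
open Real Finset Filter

namespace EulerArctan

noncomputable def A (n : ℕ) : ℝ :=
  2 ^ (2 * n) * (Nat.factorial n : ℝ) ^ 2 / (Nat.factorial (2 * n + 1) : ℝ)

noncomputable def C (n : ℕ) : ℝ :=
  2 ^ (2 * n) * (Nat.factorial n : ℝ) ^ 2 / (Nat.factorial (2 * n) : ℝ)

lemma factR_pos (m : ℕ) : (0:ℝ) < (Nat.factorial m : ℝ) := by
  exact_mod_cast Nat.factorial_pos m

lemma hC1 (n : ℕ) : C n = A n * (2 * n + 1) := by
  unfold A C
  have h : (Nat.factorial (2*n+1) : ℝ) = (2*n+1) * (Nat.factorial (2*n) : ℝ) := by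
    rw [Nat.factorial_succ]; push_cast; ring
  rw [h]
  have h2 := (factR_pos (2*n)).ne'
  have h3 : ((2*n:ℕ):ℝ) + 1 ≠ 0 := by positivity
  field_simp

lemma hC2 (n : ℕ) : C (n+1) = A n * (2 * n + 2) := by
  unfold A C
  have e1 : 2*(n+1) = (2*n+1)+1 := by ring
  rw [e1, Nat.factorial_succ, Nat.factorial_succ, Nat.factorial_succ]
  have h1 := (factR_pos (2*n)).ne'
  have h4 : (2:ℝ)^((2*n+1)+1) = 4 * 2^(2*n) := by rw [pow_succ, pow_succ]; ring
  rw [h4]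
  push_cast
  have h3 : ((2:ℝ)*n + 1) ≠ 0 := by positivity
  have h5 : ((2:ℝ)*n + 1 + 1) ≠ 0 := by positivity
  field_simp
  ring

noncomputable def f (n : ℕ) (x : ℝ) : ℝ := A n * (x ^ (2*n+1) / (1 + x^2) ^ (n+1))
noncomputable def g (n : ℕ) (x : ℝ) : ℝ := C n * (x ^ (2*n) / (1 + x^2) ^ (n+1))

lemma one_add_sq_pos (x : ℝ) : (0:ℝ) < 1 + x^2 := by positivity

lemma hfderiv (n : ℕ) (x : ℝ) : HasDerivAt (f n) (g n x - g (n+1) x) x := by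
  have hpos := one_add_sq_pos x
  have h1 : HasDerivAt (fun x : ℝ => x ^ (2*n+1)) ((2*n+1 : ℕ) * x^(2*n)) x := by
    simpa using hasDerivAt_pow (2*n+1) x
  have hb : HasDerivAt (fun x : ℝ => 1 + x^2) (2*x) x := by
    simpa using ((hasDerivAt_pow 2 x).const_add 1)
  have h2 : HasDerivAt (fun x : ℝ => (1 + x^2) ^ (n+1)) ((n+1 : ℕ) * (1+x^2)^n * (2*x)) x := by
    simpa using hb.fun_pow (n+1)
  have h3 : HasDerivAt (fun y : ℝ => A n * (y^(2*n+1) / (1+y^2)^(n+1))) _ x := ((h1.fun_div h2 (by positivity)).const_mul (A n))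
  convert h3 using 1
  · rfl
  rw [g, g, hC1, hC2]
  have hne : (1 + x^2) ≠ 0 := hpos.ne'
  field_simp
  push_cast
  ring

lemma g_zero (x : ℝ) : g 0 x = 1 / (1 + x^2) := by
  simp [g, C, Nat.factorial]

lemma hHderiv (n : ℕ) (x : ℝ) :
    HasDerivAt (fun y => arctan y - ∑ k ∈ range n, f k y) (g n x) x := by
  have hS : HasDerivAt (fun y => ∑ k ∈ range n, f k y) (g 0 x - g n x) x := by
    have h := HasDerivAt.fun_sum (fun k (_ : k ∈ range n) => hfderiv k x)
    rwa [Finset.sum_range_sub' (fun k => g k x) n] at h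
  have := (Real.hasDerivAt_arctan x).fun_sub hS
  rw [g_zero] at this
  simpa using this

lemma A_le_one (n : ℕ) : A n ≤ 1 := by
  have h : 2^(2*n) * (Nat.factorial n)^2 ≤ Nat.factorial (2*n+1) := by
    induction n with
    | zero => simp
    | succ n ih =>
      have e1 : 2*(n+1) = 2*n+2 := by ring
      have e2 : (2:ℕ)^(2*n+2) = 4 * 2^(2*n) := by rw [pow_succ, pow_succ]; ring
      calc 2^(2*(n+1)) * (Nat.factorial (n+1))^2
          = 4*(n+1)^2 * (2^(2*n) * (Nat.factorial n)^2) := by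
            rw [e1, e2, Nat.factorial_succ]; ring
        _ ≤ 4*(n+1)^2 * Nat.factorial (2*n+1) := Nat.mul_le_mul_left _ ih
        _ ≤ (2*n+1+1+1)*((2*n+1+1) * Nat.factorial (2*n+1)) := by
            have h45 : 4*(n+1)^2 ≤ (2*n+1+1+1)*(2*n+1+1) := by nlinarith
            calc 4*(n+1)^2 * Nat.factorial (2*n+1)
                ≤ ((2*n+1+1+1)*(2*n+1+1)) * Nat.factorial (2*n+1) :=
                  Nat.mul_le_mul_right _ h45
              _ = (2*n+1+1+1)*((2*n+1+1) * Nat.factorial (2*n+1)) := by ring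
        _ = Nat.factorial (2*(n+1)+1) := by
            have e3 : 2*(n+1)+1 = (2*n+1)+1+1 := by ring
            rw [e3, Nat.factorial_succ (2*n+1+1), Nat.factorial_succ (2*n+1)]
  rw [A, div_le_one (factR_pos _)]
  exact_mod_cast h

lemma A_nonneg (n : ℕ) : 0 ≤ A n := by
  rw [A]; positivity

lemma C_nonneg (n : ℕ) : 0 ≤ C n := by
  rw [C]; positivity

lemma C_le (n : ℕ) : C n ≤ 2*n+1 := by
  rw [hC1]
  have h1 : (0:ℝ) ≤ 2*n+1 := by positivity
  nlinarith [A_le_one n, A_nonneg n]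

lemma ratio_mono {t x : ℝ} (h : t^2 ≤ x^2) : t^2/(1+t^2) ≤ x^2/(1+x^2) := by
  rw [div_le_div_iff₀ (one_add_sq_pos t) (one_add_sq_pos x)]
  nlinarith

lemma g_bound {n : ℕ} {t x : ℝ} (h : t^2 ≤ x^2) :
    |g n t| ≤ (2*n+1) * (x^2/(1+x^2))^n := by
  have hpt := one_add_sq_pos t
  have hpow : (0:ℝ) ≤ t ^ (2*n) := by
    rw [pow_mul]; positivity
  have hge : 0 ≤ g n t := by
    rw [g]
    exact mul_nonneg (C_nonneg n) (div_nonneg hpow (by positivity))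
  rw [abs_of_nonneg hge, g]
  have h1 : t ^ (2*n) / (1+t^2)^(n+1) ≤ (x^2/(1+x^2))^n := by
    have e : t ^ (2*n) / (1+t^2)^(n+1) = (t^2/(1+t^2))^n * (1/(1+t^2)) := by
      rw [pow_mul, div_pow, pow_succ (1+t^2) n, div_mul_div_comm, mul_one]
    rw [e]
    have h2 : (t^2/(1+t^2))^n ≤ (x^2/(1+x^2))^n :=
      pow_le_pow_left₀ (by positivity) (ratio_mono h) n
    have h3 : 1/(1+t^2) ≤ 1 := by
      rw [div_le_one hpt]; nlinarith
    calc (t^2/(1+t^2))^n * (1/(1+t^2)) ≤ (x^2/(1+x^2))^n * 1 := by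
          apply mul_le_mul h2 h3 (by positivity) (by positivity)
      _ = (x^2/(1+x^2))^n := by ring
  have hd : (0:ℝ) ≤ t ^ (2*n) / (1+t^2)^(n+1) := div_nonneg hpow (by positivity)
  calc C n * (t ^ (2*n) / (1+t^2)^(n+1)) ≤ (2*n+1) * (x^2/(1+x^2))^n := by
        apply mul_le_mul (C_le n) h1 hd (by positivity)

lemma partial_bound (n : ℕ) (x : ℝ) :
    |arctan x - ∑ k ∈ range n, f k x| ≤ ((2*n+1) * (x^2/(1+x^2))^n) * |x| := by
  set s : Set ℝ := Set.uIcc 0 x with hs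
  have hmem : ∀ t ∈ s, t^2 ≤ x^2 := by
    intro t ht
    rw [hs, Set.mem_uIcc] at ht
    rcases ht with ⟨h1, h2⟩ | ⟨h1, h2⟩ <;> nlinarith
  have hder : ∀ t ∈ s, HasDerivWithinAt (fun y => arctan y - ∑ k ∈ range n, f k y) (g n t) s t :=
    fun t _ => (hHderiv n t).hasDerivWithinAt
  have hb : ∀ t ∈ s, ‖g n t‖ ≤ (2*n+1) * (x^2/(1+x^2))^n :=
    fun t ht => g_bound (hmem t ht)
  have key := (convex_uIcc (0:ℝ) x).norm_image_sub_le_of_norm_hasDerivWithin_le hder hb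
      (Set.left_mem_uIcc) (Set.right_mem_uIcc)
  have h0 : arctan 0 - ∑ k ∈ range n, f k 0 = 0 := by
    simp [f, Real.arctan_zero]
  simp only [Real.norm_eq_abs] at key
  rw [h0, sub_zero, sub_zero] at key
  exact key

lemma ratio_lt_one (x : ℝ) : x^2/(1+x^2) < 1 := by
  rw [div_lt_one (one_add_sq_pos x)]; nlinarith

theorem main (x : ℝ) : HasSum (fun n => f n x) (Real.arctan x) := by
  set y := x^2/(1+x^2) with hy
  have hy0 : 0 ≤ y := by rw [hy]; positivity
  have hy1 : y < 1 := ratio_lt_one x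
  have hpos := one_add_sq_pos x
  have hfb : ∀ n, ‖f n x‖ ≤ |x| * y^n := by
    intro n
    have : ‖f n x‖ = A n * (|x|^(2*n+1) / (1+x^2)^(n+1)) := by
      rw [f, norm_mul, Real.norm_eq_abs, Real.norm_eq_abs, abs_of_nonneg (A_nonneg n),
        abs_div, abs_pow, abs_pow, abs_of_pos hpos]
    rw [this]
    have e : |x|^(2*n+1) / (1+x^2)^(n+1) = |x| * y^n * (1/(1+x^2)) := by
      rw [hy, div_pow]
      have : |x|^(2*n+1) = (x^2)^n * |x| := by
        rw [pow_succ, pow_mul, sq_abs]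
      rw [this]
      field_simp
      ring
    rw [e]
    have h3 : 1/(1+x^2) ≤ 1 := by rw [div_le_one hpos]; nlinarith
    have h4 : 0 ≤ |x| * y^n := by positivity
    nlinarith [A_le_one n, A_nonneg n, mul_le_mul_of_nonneg_left h3 h4]
  have hsummable : Summable (fun n => f n x) := by
    apply Summable.of_norm_bounded ((summable_geometric_of_lt_one hy0 hy1).mul_left |x|) hfb
  have htend1 : Tendsto (fun n => ∑ k ∈ range n, f k x) atTop (nhds (∑' n, f n x)) :=
    hsummable.hasSum.tendsto_sum_nat
  have htend2 : Tendsto (fun n => ∑ k ∈ range n, f k x) atTop (nhds (Real.arctan x)) := by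
    have hB : Tendsto (fun n : ℕ => ((2*n+1) * y^n) * |x|) atTop (nhds 0) := by
      have h1 : Tendsto (fun n : ℕ => (n:ℝ) * y^n) atTop (nhds 0) :=
        tendsto_self_mul_const_pow_of_lt_one hy0 hy1
      have h2 : Tendsto (fun n : ℕ => y^n) atTop (nhds 0) :=
        tendsto_pow_atTop_nhds_zero_of_lt_one hy0 hy1
      have h3 : Tendsto (fun n : ℕ => (2 * ((n:ℝ) * y^n) + y^n) * |x|) atTop (nhds ((2*0+0)*|x|)) :=
        (((h1.const_mul 2).add h2).mul_const |x|)
      simpa using h3.congr (fun n => by ring)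
    rw [← tendsto_sub_nhds_zero_iff]
    apply squeeze_zero_norm (fun n => ?_) hB
    have := partial_bound n x
    rw [Real.norm_eq_abs, abs_sub_comm]
    exact this
  have : (∑' n, f n x) = Real.arctan x := tendsto_nhds_unique htend1 htend2
  rw [← this]
  exact hsummable.hasSum

end EulerArctan

theorem euler_arctan_series (x : ℝ) :
    HasSum
      (fun n : ℕ =>
        (2 ^ (2 * n) * (Nat.factorial n : ℝ) ^ 2 / (Nat.factorial (2 * n + 1) : ℝ)) *
          (x ^ (2 * n + 1) / (1 + x ^ 2) ^ (n + 1)))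
      (Real.arctan x) := EulerArctan.main x
end

section
/- The fixed point iteration aₙ = aₙ₋₁ + cos(aₙ₋₁) converges to π/2 for any initial value a₀ in the open interval (0, π): lim_{n→∞} aₙ = π/2. -/
open Real Filter

private lemma g_mono : Monotone (fun t : ℝ => t - Real.sin t) := by
  apply monotone_of_deriv_nonneg
  · fun_prop
  · intro x
    have h : HasDerivAt (fun t : ℝ => t - Real.sin t) (1 - Real.cos x) x :=
      (hasDerivAt_id x).sub (Real.hasDerivAt_sin x)
    rw [h.deriv]
    have := Real.cos_le_one x
    linarith

private lemma g_nonneg {t : ℝ} (ht : 0 ≤ t) : 0 ≤ t - Real.sin t := by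
  have := g_mono ht
  simpa using this

private lemma abs_g (t : ℝ) : |t - Real.sin t| = |t| - Real.sin |t| := by
  rcases le_total 0 t with h | h
  · rw [abs_of_nonneg h, abs_of_nonneg (g_nonneg h)]
  · have h' : 0 ≤ -t := by linarith
    rw [abs_of_nonpos h, show t - Real.sin t = -((-t) - Real.sin (-t)) by
      rw [Real.sin_neg]; ring, abs_neg, abs_of_nonneg (g_nonneg h')]

private lemma lemA {t : ℝ} (ht : |t| ≤ Real.pi / 2) :
    |t - Real.sin t| ≤ Real.pi / 2 - 1 := by
  rw [abs_g]
  have := g_mono ht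
  simpa [Real.sin_pi_div_two] using this

private lemma lemB {t : ℝ} (ht : |t| ≤ Real.pi / 2 - 1) :
    |t - Real.sin t| ≤ (Real.pi / 2 - 1) ^ 2 / 4 * |t| := by
  rw [abs_g]
  set s := |t| with hs
  have hs0 : 0 ≤ s := abs_nonneg t
  rcases eq_or_lt_of_le hs0 with h | h
  · simp [← h]
  · have hpi : Real.pi < 3.15 := Real.pi_lt_d2
    have hs1 : s ≤ 1 := by linarith
    have := Real.sin_gt_sub_cube h
    nlinarith [sq_nonneg s, sq_nonneg (s - (Real.pi / 2 - 1))]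

theorem cos_iteration_tendsto_pi_half (a : ℕ → ℝ)
    (h0 : a 0 ∈ Set.Ioo 0 Real.pi)
    (hrec : ∀ n, a (n + 1) = a n + Real.cos (a n)) :
    Filter.Tendsto a Filter.atTop (nhds (Real.pi / 2)) := by
  set c : ℝ := (Real.pi / 2 - 1) ^ 2 / 4 with hc
  have hpi : Real.pi < 3.15 := Real.pi_lt_d2
  have hpi3 : 3 < Real.pi := Real.pi_gt_three
  have hc0 : 0 ≤ c := by positivity
  have hc1 : c < 1 := by rw [hc]; nlinarith
  -- the recursion for t n = a n - π/2
  have hstep : ∀ n, a (n + 1) - Real.pi / 2 =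
      (a n - Real.pi / 2) - Real.sin (a n - Real.pi / 2) := by
    intro n
    have : Real.cos (a n) = -Real.sin (a n - Real.pi / 2) := by
      rw [Real.sin_sub]; simp
    rw [hrec n, this]; ring
  have h1 : |a 1 - Real.pi / 2| ≤ Real.pi / 2 - 1 := by
    rw [hstep 0]
    apply lemA
    rw [abs_le]
    obtain ⟨hl, hr⟩ := h0
    constructor <;> linarith
  have key : ∀ n, |a (n + 1) - Real.pi / 2| ≤ (Real.pi / 2 - 1) * c ^ n := by
    intro n
    induction n with
    | zero => simpa using h1
    | succ n ih =>
      have hbd : |a (n + 1) - Real.pi / 2| ≤ Real.pi / 2 - 1 := by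
        calc |a (n + 1) - Real.pi / 2| ≤ (Real.pi / 2 - 1) * c ^ n := ih
          _ ≤ (Real.pi / 2 - 1) * 1 := by
              apply mul_le_mul_of_nonneg_left _ (by linarith)
              exact pow_le_one₀ hc0 hc1.le
          _ = Real.pi / 2 - 1 := mul_one _
      calc |a (n + 1 + 1) - Real.pi / 2|
          = |(a (n + 1) - Real.pi / 2) - Real.sin (a (n + 1) - Real.pi / 2)| := by
            rw [hstep (n + 1)]
        _ ≤ c * |a (n + 1) - Real.pi / 2| := lemB hbd
        _ ≤ c * ((Real.pi / 2 - 1) * c ^ n) := mul_le_mul_of_nonneg_left ih hc0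
        _ = (Real.pi / 2 - 1) * c ^ (n + 1) := by ring
  rw [← Filter.tendsto_add_atTop_iff_nat 1]
  rw [tendsto_iff_dist_tendsto_zero]
  have hg : Tendsto (fun n : ℕ => (Real.pi / 2 - 1) * c ^ n) atTop (nhds 0) := by
    simpa using tendsto_const_nhds.mul (tendsto_pow_atTop_nhds_zero_of_lt_one hc0 hc1)
  exact squeeze_zero (fun n => dist_nonneg)
    (fun n => by rw [Real.dist_eq]; exact key n) hg
end
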